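/- Let F be a field of characteristic p, α ∈ F, β ∈ F×, and let K = F[x : x^p - x = α]. For any f ∈ K with N_{K/F}(f) ≠ 0, one has [α,β)_{p,F} ≅ [α, N_{K/F}(f)·β)_{p,F}. -/

import Mathlib

/-
Let `σ` be the automorphism `root ↦ root + 1` of `K = F[X]/(X^p - X - α)`, of order `p`. The product
`∏_{i<p} σ^i z` is `σ`-fixed, and the `σ`-fixed elements of `K` are scalars, so it is a scalar `t`;
taking norms gives `t^p = N(z)^p`, whence `∏_{i<p} σ^i z = N(z)`.

In `[α,b)` the element `x` generates a copy of `K` on which conjugation by `y` acts as `σ`, so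
`(z y)^p = (∏_{i<p} σ^i z) y^p = N(z) b`. Therefore `x ↦ x`, `y ↦ z y` defines a homomorphism
`[α, N(z) b) → [α, b)`, and for a unit `z` (which `N(z) ≠ 0` guarantees) the homomorphism built
from `z⁻¹` is its inverse.
-/

/-- The defining relations of the symbol `p`-algebra
`[a,b)_{p,F} = F⟨x,y : x^p - x = a, y^p = b, yx - xy = y⟩`. -/
inductive SymbolRel (F : Type) [Field F] (p : ℕ) (a b : F) :
    FreeAlgebra F (Fin 2) → FreeAlgebra F (Fin 2) → Prop
  | x : SymbolRel F p a b (FreeAlgebra.ι F 0 ^ p - FreeAlgebra.ι F 0) (algebraMap F _ a)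
  | y : SymbolRel F p a b (FreeAlgebra.ι F 1 ^ p) (algebraMap F _ b)
  | comm : SymbolRel F p a b
      (FreeAlgebra.ι F 1 * FreeAlgebra.ι F 0 - FreeAlgebra.ι F 0 * FreeAlgebra.ι F 1)
      (FreeAlgebra.ι F 1)

/-- The symbol `p`-algebra `[a,b)_{p,F}`. -/
abbrev SymbolAlg (F : Type) [Field F] (p : ℕ) (a b : F) : Type :=
  RingQuot (SymbolRel F p a b)

open Polynomial AdjoinRoot

noncomputable section

theorem Polynomial.eq_C_eval_zero_of_comp_X_add_one {p : ℕ} [Fact p.Prime] {R : Type*}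
    [CommRing R] [IsDomain R] [CharP R p] {r : R[X]} (hr : r.natDegree < p)
    (h : r.comp (X + 1) = r) : r = C (r.eval 0) := by
  have eval_natCast : ∀ n : ℕ, r.eval (n : R) = r.eval 0 := by
    intro n
    induction n with
    | zero => rw [Nat.cast_zero]
    | succ n ih =>
      calc r.eval ((n + 1 : ℕ) : R) = (r.comp (X + 1)).eval (n : R) := by simp [eval_comp]
        _ = r.eval 0 := by rw [h, ih]
  -- `r - C (r.eval 0)` has degree `< p` but vanishes on the prime field.
  refine sub_eq_zero.mp (eq_zero_of_natDegree_lt_card_of_eval_eq_zero _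
    (ZMod.castHom (dvd_refl p) R).injective (fun k => ?_) ?_)
  · rw [eval_sub, eval_C, ZMod.castHom_apply, ← ZMod.natCast_val, eval_natCast, sub_self]
  · rwa [ZMod.card, natDegree_sub_C]

theorem AdjoinRoot.mk_injOn_degree_lt {R : Type*} [CommRing R] [Nontrivial R] {g : R[X]}
    (hg : g.Monic) : Set.InjOn (mk g) {r | r.degree < g.degree} := fun r hr s hs h => by
  rw [← (modByMonic_eq_self_iff hg).2 hr, ← (modByMonic_eq_self_iff hg).2 hs]
  exact congrArg (modByMonicHom hg) h

theorem Algebra.mul_apply_eq_apply_mul_of_adjoin_eq_top {R A B : Type*} [CommSemiring R]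
    [Semiring A] [Semiring B] [Algebra R A] [Algebra R B] {s : Set A}
    (hs : Algebra.adjoin R s = ⊤) (φ ψ : A →ₐ[R] B) (u : B)
    (h : ∀ a ∈ s, u * φ a = ψ a * u) (a : A) : u * φ a = ψ a * u := by
  induction (hs ▸ Algebra.mem_top : a ∈ Algebra.adjoin R s) using Algebra.adjoin_induction with
  | mem a ha => exact h a ha
  | algebraMap r => rw [AlgHom.commutes, AlgHom.commutes, Algebra.commutes]
  | add a b _ _ ha hb => rw [map_add, map_add, mul_add, add_mul, ha, hb]
  | mul a b _ _ ha hb => rw [map_mul, map_mul, ← mul_assoc, ha, mul_assoc, hb, mul_assoc]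

theorem Algebra.isUnit_of_isUnit_norm {R S : Type*} [CommRing R] [Ring S] [Algebra R S]
    [Module.Finite R S] [Module.Free R S] {x : S} (h : IsUnit (Algebra.norm R x)) : IsUnit x :=
  Algebra.lmul_isUnit_iff.mp ((LinearMap.isUnit_iff_isUnit_det _).mpr h)

namespace ArtinSchreier

variable (p : ℕ) {F : Type*} [Field F] (α : F)

abbrev poly : F[X] := X ^ p - X - C α

variable [Fact p.Prime]

theorem natDegree_poly : (poly p α).natDegree = p := by
  rw [poly, sub_sub, natDegree_sub_eq_left_of_natDegree_lt] <;>
    simp [(Fact.out : p.Prime).one_lt]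

theorem monic_poly : (poly p α).Monic := by
  rw [poly, sub_sub]
  exact (monic_X_pow p).sub_of_left (by
    rw [degree_X_pow, degree_X_add_C]
    exact_mod_cast (Fact.out : p.Prime).one_lt)

theorem finrank_adjoinRoot_poly : Module.finrank F (AdjoinRoot (poly p α)) = p := by
  rw [(powerBasis' (monic_poly p α)).finrank, powerBasis'_dim, natDegree_poly]

variable [CharP F p]

theorem poly_comp_X_add_C {c : F} (hc : c ^ p = c) : (poly p α).comp (X + C c) = poly p α := by
  simp only [poly, sub_comp, pow_comp, X_comp, C_comp]
  rw [add_pow_char, ← C_pow, hc]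
  ring

def translate (c : F) (hc : c ^ p = c) : AdjoinRoot (poly p α) →ₐ[F] AdjoinRoot (poly p α) :=
  liftAlgHom _ (Algebra.ofId F _) (root _ + algebraMap F _ c) (by
    change aeval (root _ + algebraMap F _ c) (poly p α) = 0
    have : root (poly p α) + algebraMap F _ c = aeval (root (poly p α)) (X + C c) := by simp
    rw [this, ← aeval_comp, poly_comp_X_add_C p α hc, aeval_eq, mk_self])

theorem translate_root (c : F) (hc : c ^ p = c) :
    translate p α c hc (root _) = root _ + algebraMap F _ c :=
  liftAlgHom_root _ _ _ _

def sigma : AdjoinRoot (poly p α) ≃ₐ[F] AdjoinRoot (poly p α) :=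
  AlgEquiv.ofAlgHom (translate p α 1 (one_pow p)) (translate p α (-1) (neg_one_pow_char F p))
    (algHom_ext (by simp [translate_root])) (algHom_ext (by simp [translate_root]))

theorem sigma_mk (r : F[X]) : sigma p α (mk _ r) = mk _ (r.comp (X + 1)) := by
  change translate p α 1 (one_pow p) (mk _ r) = _
  rw [translate, liftAlgHom_mk, ← aeval_eq, aeval_comp]
  simp [aeval_def]

theorem sigma_root : sigma p α (root _) = root _ + 1 := by
  rw [← map_one (algebraMap F (AdjoinRoot (poly p α)))]
  exact translate_root p α 1 (one_pow p)

theorem sigma_pow_root (n : ℕ) :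
    (sigma p α ^ n) (root _) = root _ + (n : AdjoinRoot (poly p α)) := by
  induction n with
  | zero => simp
  | succ n ih =>
    rw [pow_succ', AlgEquiv.mul_apply, ih, map_add, map_natCast, sigma_root, Nat.cast_succ]
    ring

theorem sigma_pow_char : sigma p α ^ p = 1 :=
  AlgEquiv.coe_toAlgHom_injective (algHom_ext (by
    simp [sigma_pow_root, ← map_natCast (algebraMap F (AdjoinRoot (poly p α)))]))

theorem sigma_prod_range_sigma_pow (z : AdjoinRoot (poly p α)) :
    sigma p α (∏ i ∈ Finset.range p, (sigma p α ^ i) z) =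
      ∏ i ∈ Finset.range p, (sigma p α ^ i) z := by
  obtain ⟨m, rfl⟩ := Nat.exists_eq_add_one.mpr (Fact.out : p.Prime).pos
  simp only [map_prod, ← AlgEquiv.mul_apply, ← pow_succ']
  rw [Finset.prod_range_succ, Finset.prod_range_succ' _ m, sigma_pow_char, pow_zero, mul_comm]

theorem exists_algebraMap_eq_of_sigma_apply_eq {z : AdjoinRoot (poly p α)}
    (hz : sigma p α z = z) : ∃ t : F, algebraMap F _ t = z := by
  obtain ⟨r, hr, rfl⟩ : ∃ r : F[X], r.natDegree < p ∧ mk _ r = z := by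
    obtain ⟨r, rfl⟩ := mk_surjective z
    refine ⟨r %ₘ poly p α, ?_, mk_leftInverse (monic_poly p α) (mk _ r)⟩
    refine (natDegree_modByMonic_lt r (monic_poly p α) (ne_of_apply_ne natDegree ?_)).trans_eq
      (natDegree_poly p α)
    rw [natDegree_poly, natDegree_one]
    exact (Fact.out : p.Prime).ne_zero
  have degree_lt : ∀ s : F[X], s.natDegree < p → s.degree < (poly p α).degree :=
    fun s hs => degree_lt_degree (by rwa [natDegree_poly])
  have hcomp : r.comp (X + 1) = r :=
    mk_injOn_degree_lt (monic_poly p α)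
      (degree_lt _ (by rwa [natDegree_comp, ← C_1, natDegree_X_add_C, mul_one]))
      (degree_lt _ hr) (by rwa [← sigma_mk])
  refine ⟨r.eval 0, ?_⟩
  rw [eq_C_eval_zero_of_comp_X_add_one hr hcomp, mk_C, eval_C]
  rfl

theorem prod_range_sigma_pow_eq_algebraMap_norm (z : AdjoinRoot (poly p α)) :
    ∏ i ∈ Finset.range p, (sigma p α ^ i) z = algebraMap F _ (Algebra.norm F z) := by
  obtain ⟨t, ht⟩ := exists_algebraMap_eq_of_sigma_apply_eq p α (sigma_prod_range_sigma_pow p α z)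
  have : frobenius F p t = frobenius F p (Algebra.norm F z) :=
    calc t ^ p = Algebra.norm F (algebraMap F (AdjoinRoot (poly p α)) t) := by
          rw [Algebra.norm_algebraMap, finrank_adjoinRoot_poly]
      _ = ∏ i ∈ Finset.range p, Algebra.norm F ((sigma p α ^ i) z) := by rw [ht, map_prod]
      _ = Algebra.norm F z ^ p := by
          rw [Finset.prod_congr rfl fun i _ => Algebra.norm_eq_of_algEquiv (sigma p α ^ i) z,
            Finset.prod_const, Finset.card_range]
  rw [← ht, frobenius_inj F p this]

end ArtinSchreier

namespace SymbolAlg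

variable {F : Type} [Field F] {p : ℕ} {a b b' : F}

def x : SymbolAlg F p a b := RingQuot.mkAlgHom F _ (FreeAlgebra.ι F 0)

def y : SymbolAlg F p a b := RingQuot.mkAlgHom F _ (FreeAlgebra.ι F 1)

theorem x_pow_sub_x : (x : SymbolAlg F p a b) ^ p - x = algebraMap F _ a := by
  have h := RingQuot.mkAlgHom_rel F (SymbolRel.x (F := F) (p := p) (a := a) (b := b))
  rw [map_sub, map_pow, AlgHom.commutes] at h
  exact h

theorem y_pow : (y : SymbolAlg F p a b) ^ p = algebraMap F _ b := by
  have h := RingQuot.mkAlgHom_rel F (SymbolRel.y (F := F) (p := p) (a := a) (b := b))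
  rw [map_pow, AlgHom.commutes] at h
  exact h

theorem y_mul_x : (y : SymbolAlg F p a b) * x = (x + 1) * y := by
  have h := RingQuot.mkAlgHom_rel F (SymbolRel.comm (F := F) (p := p) (a := a) (b := b))
  rw [map_sub, map_mul, map_mul, sub_eq_iff_eq_add] at h
  rw [add_one_mul, add_comm]
  exact h

section lift

variable {A : Type*} [Ring A] [Algebra F A]

def lift (u v : A) (hu : u ^ p - u = algebraMap F A a) (hv : v ^ p = algebraMap F A b)
    (hvu : v * u = (u + 1) * v) : SymbolAlg F p a b →ₐ[F] A :=
  RingQuot.liftAlgHom F ⟨FreeAlgebra.lift F ![u, v], fun _ _ h => by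
    cases h <;> simp [hu, hv, hvu, add_one_mul]⟩

variable (u v : A) (hu : u ^ p - u = algebraMap F A a) (hv : v ^ p = algebraMap F A b)
    (hvu : v * u = (u + 1) * v)

theorem lift_x : lift u v hu hv hvu x = u := by
  simp [lift, x]

theorem lift_y : lift u v hu hv hvu y = v := by
  simp [lift, y]

theorem hom_ext {φ ψ : SymbolAlg F p a b →ₐ[F] A} (hx : φ x = ψ x) (hy : φ y = ψ y) : φ = ψ :=
  RingQuot.ringQuot_ext' F _ _
    (FreeAlgebra.hom_ext (funext fun i => by fin_cases i <;> assumption))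

end lift

open ArtinSchreier

theorem aeval_x_poly : aeval (x : SymbolAlg F p a b) (poly p a) = 0 := by
  rw [poly, map_sub, map_sub, map_pow, aeval_X, aeval_C, x_pow_sub_x, sub_self]

def ofAdjoinRoot : AdjoinRoot (poly p a) →ₐ[F] SymbolAlg F p a b :=
  Ideal.Quotient.liftₐ _ (aeval x) fun r hr => by
    obtain ⟨c, rfl⟩ := Ideal.mem_span_singleton'.mp hr
    rw [map_mul, aeval_x_poly, mul_zero]

theorem ofAdjoinRoot_root : (ofAdjoinRoot (root _) : SymbolAlg F p a b) = x :=
  aeval_X x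

theorem commute_ofAdjoinRoot_x_add_one (z : AdjoinRoot (poly p a)) :
    Commute (ofAdjoinRoot z : SymbolAlg F p a b) (x + 1) := by
  rw [← ofAdjoinRoot_root, ← map_one ofAdjoinRoot, ← map_add]
  exact (Commute.all z _).map _

variable [Fact p.Prime] [CharP F p]

theorem y_mul_ofAdjoinRoot (z : AdjoinRoot (poly p a)) :
    (y : SymbolAlg F p a b) * ofAdjoinRoot z = ofAdjoinRoot (sigma p a z) * y :=
  Algebra.mul_apply_eq_apply_mul_of_adjoin_eq_top adjoinRoot_eq_top ofAdjoinRoot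
    (ofAdjoinRoot.comp (sigma p a).toAlgHom) y
    (by simp [sigma_root, ofAdjoinRoot_root, y_mul_x]) z

theorem ofAdjoinRoot_mul_y_pow (z : AdjoinRoot (poly p a)) (n : ℕ) :
    ((ofAdjoinRoot z : SymbolAlg F p a b) * y) ^ n =
      ofAdjoinRoot (∏ i ∈ Finset.range n, (sigma p a ^ i) z) * y ^ n := by
  induction n with
  | zero => simp
  | succ n ih =>
    rw [pow_succ', ih, mul_assoc, ← mul_assoc y, y_mul_ofAdjoinRoot, mul_assoc, ← mul_assoc,
      ← map_mul, ← pow_succ', Finset.prod_range_succ', map_prod]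
    simp only [← AlgEquiv.mul_apply, ← pow_succ', pow_zero, AlgEquiv.one_apply, mul_comm z]

theorem ofAdjoinRoot_mul_y_pow_char (z : AdjoinRoot (poly p a)) :
    ((ofAdjoinRoot z : SymbolAlg F p a b) * y) ^ p = algebraMap F _ (Algebra.norm F z * b) := by
  rw [ofAdjoinRoot_mul_y_pow, prod_range_sigma_pow_eq_algebraMap_norm, AlgHom.commutes, y_pow,
    ← map_mul]

def twist (z : AdjoinRoot (poly p a)) (hz : Algebra.norm F z * b = b') :
    SymbolAlg F p a b' →ₐ[F] SymbolAlg F p a b :=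
  lift x (ofAdjoinRoot z * y) x_pow_sub_x (by rw [ofAdjoinRoot_mul_y_pow_char, hz]) (by
    rw [mul_assoc, y_mul_x, ← mul_assoc, ← mul_assoc, (commute_ofAdjoinRoot_x_add_one z).eq])

theorem twist_x (z : AdjoinRoot (poly p a)) (hz : Algebra.norm F z * b = b') :
    twist z hz x = x :=
  lift_x _ _ _ _ _

theorem twist_y (z : AdjoinRoot (poly p a)) (hz : Algebra.norm F z * b = b') :
    twist z hz y = ofAdjoinRoot z * y :=
  lift_y _ _ _ _ _

theorem twist_ofAdjoinRoot (z : AdjoinRoot (poly p a)) (hz : Algebra.norm F z * b = b')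
    (w : AdjoinRoot (poly p a)) : twist z hz (ofAdjoinRoot w) = ofAdjoinRoot w := by
  have : (twist z hz).comp ofAdjoinRoot = ofAdjoinRoot :=
    algHom_ext (by rw [AlgHom.comp_apply, ofAdjoinRoot_root, twist_x, ofAdjoinRoot_root])
  exact AlgHom.congr_fun this w

theorem twist_comp_twist {z w : AdjoinRoot (poly p a)} (hz : Algebra.norm F z * b = b')
    (hw : Algebra.norm F w * b' = b) (hwz : w * z = 1) :
    (twist z hz).comp (twist w hw) = AlgHom.id F _ :=
  hom_ext (by rw [AlgHom.comp_apply, twist_x, twist_x, AlgHom.id_apply]) (by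
    rw [AlgHom.comp_apply, twist_y, map_mul, twist_ofAdjoinRoot, twist_y, ← mul_assoc, ← map_mul,
      hwz, map_one, one_mul, AlgHom.id_apply])

end SymbolAlg

end

theorem symbol_mul_norm_right_general (p : ℕ) (hp : p.Prime) (F : Type) [Field F] [CharP F p]
    (α β : F)
    (f : AdjoinRoot (Polynomial.X ^ p - Polynomial.X - Polynomial.C α))
    (hf : Algebra.norm F f ≠ 0) :
    Nonempty (SymbolAlg F p α β ≃ₐ[F] SymbolAlg F p α (Algebra.norm F f * β)) := by
  have := Fact.mk hp
  have := (ArtinSchreier.monic_poly p α).finite_adjoinRoot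
  obtain ⟨g, hgf⟩ := (Algebra.isUnit_of_isUnit_norm hf.isUnit).exists_left_inv
  have hg : Algebra.norm F g * (Algebra.norm F f * β) = β := by
    rw [← mul_assoc, ← map_mul, hgf, map_one, one_mul]
  exact ⟨AlgEquiv.ofAlgHom (SymbolAlg.twist g hg) (SymbolAlg.twist f rfl)
    (SymbolAlg.twist_comp_twist _ _ (by rwa [mul_comm])) (SymbolAlg.twist_comp_twist _ _ hgf)⟩

/-- For `K = F[x : x^p - x = α]` and `f ∈ K` with `N_{K/F}(f) ≠ 0`,
`[α,β)_{p,F} ≅ [α, N_{K/F}(f)·β)_{p,F}`. -/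
theorem symbol_mul_norm_right (p : ℕ) (hp : p.Prime) (F : Type) [Field F] [CharP F p]
    (α β : F) (hβ : β ≠ 0)
    (f : AdjoinRoot (Polynomial.X ^ p - Polynomial.X - Polynomial.C α))
    (hf : Algebra.norm F f ≠ 0) :
    Nonempty (SymbolAlg F p α β ≃ₐ[F] SymbolAlg F p α (Algebra.norm F f * β)) :=
  symbol_mul_norm_right_general p hp F α β f hf
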